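/- Bounded-differences property of the one-step WMV score: for Z ∈ {−1,+1}^{M×N} define ŷ_k^mv(Z) = sign(Σ_{i=1}^M Z_ik) (with sign(0) = +1), ŵ_i(Z) = (1/N)·Σ_{k=1}^N 1{Z_ik = ŷ_k^mv(Z)}, and f_j(Z) = Σ_{i=1}^M (2ŵ_i(Z) − 1)·Z_ij. If M ≥ 2 and Z, Z′ ∈ {−1,+1}^{M×N} differ in exactly one entry (i*, j*), then |f_j(Z) − f_j(Z′)| ≤ 2(M−1)/N whenever j* ≠ j, and |f_j(Z) − f_j(Z′)| ≤ 2(M−1)/N + 2 whenever j* = j. -/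
import Mathlib


open MeasureTheory ProbabilityTheory Real

noncomputable section

namespace OneStepWMV

/-- Majority vote for item `j` of a `{−1,+1}`-valued label matrix `Z` (with `sign 0 = +1`). -/
def mvSign {M N : ℕ} (Z : Fin M → Fin N → ℤ) (j : Fin N) : ℤ :=
  if 0 ≤ ∑ i, Z i j then 1 else -1

/-- Estimated accuracy of worker `i`: its agreement rate with the majority vote. -/
def what {M N : ℕ} (Z : Fin M → Fin N → ℤ) (i : Fin M) : ℝ :=
  (N : ℝ)⁻¹ * ∑ j, if Z i j = mvSign Z j then (1 : ℝ) else 0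

/-- One-step weighted majority voting score `f_j(Z) = Σ_i (2ŵ_i − 1) Z_ij` of item `j`. -/
def wmvScore {M N : ℕ} (Z : Fin M → Fin N → ℤ) (j : Fin N) : ℝ :=
  ∑ i, (2 * what Z i - 1) * (Z i j : ℝ)

/-- One-step weighted majority vote for item `j` (with `sign 0 = +1`). -/
def wmvSign {M N : ℕ} (Z : Fin M → Fin N → ℤ) (j : Fin N) : ℤ :=
  if 0 ≤ wmvScore Z j then 1 else -1

end OneStepWMV

/-- Bounded-differences property of the one-step WMV score: if `M ≥ 2`
and the `{−1,+1}`-valued matrices `Z, Z′` differ in exactly one entry `(i*, j*)`, then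
`|f_j(Z) − f_j(Z′)| ≤ 2(M−1)/N` whenever `j* ≠ j`, and
`|f_j(Z) − f_j(Z′)| ≤ 2(M−1)/N + 2` whenever `j* = j`. -/
theorem one_step_wmv_score_bounded_differences
    {M N : ℕ} (hM : 2 ≤ M) (hN : 0 < N)
    (Z Z' : Fin M → Fin N → ℤ)
    (hZ : ∀ i j, Z i j = 1 ∨ Z i j = -1) (hZ' : ∀ i j, Z' i j = 1 ∨ Z' i j = -1)
    (istar : Fin M) (jstar : Fin N)
    (hdiff : Z istar jstar ≠ Z' istar jstar)
    (hsame : ∀ i j, (i, j) ≠ (istar, jstar) → Z i j = Z' i j) :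
    ∀ j : Fin N,
      (jstar ≠ j →
        |OneStepWMV.wmvScore Z j - OneStepWMV.wmvScore Z' j|
          ≤ 2 * ((M : ℝ) - 1) / (N : ℝ))
      ∧ (jstar = j →
        |OneStepWMV.wmvScore Z j - OneStepWMV.wmvScore Z' j|
          ≤ 2 * ((M : ℝ) - 1) / (N : ℝ) + 2) := by

  classical
  have hNR : (0:ℝ) < (N:ℝ) := by exact_mod_cast hN
  -- entries off column jstar agree
  have hcol : ∀ (k : Fin N), k ≠ jstar → ∀ i, Z i k = Z' i k := by
    intro k hk i
    exact hsame i k (by simp [Prod.ext_iff, hk])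
  have hmv : ∀ (k : Fin N), k ≠ jstar →
      OneStepWMV.mvSign Z k = OneStepWMV.mvSign Z' k := by
    intro k hk
    unfold OneStepWMV.mvSign
    rw [Finset.sum_congr rfl (fun i _ => hcol k hk i)]
  set d : Fin M → ℝ := fun i =>
    (if Z i jstar = OneStepWMV.mvSign Z jstar then (1:ℝ) else 0)
    - (if Z' i jstar = OneStepWMV.mvSign Z' jstar then (1:ℝ) else 0) with hd
  have habs1 : ∀ i, |d i| ≤ 1 := by
    intro i
    rw [hd]
    simp only []
    split <;> split <;> norm_num
  have hwhat : ∀ i, OneStepWMV.what Z i - OneStepWMV.what Z' i = (N:ℝ)⁻¹ * d i := by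
    intro i
    unfold OneStepWMV.what
    rw [← mul_sub, ← Finset.sum_sub_distrib]
    congr 1
    rw [Finset.sum_eq_single jstar]
    · intro k _ hk
      rw [hcol k hk i, hmv k hk]
      ring
    · simp
  have hZreal : ∀ i j, |(Z i j : ℝ)| = 1 := by
    intro i j
    rcases hZ i j with h | h <;> rw [h] <;> norm_num
  have hZ'real : ∀ i j, |(Z' i j : ℝ)| = 1 := by
    intro i j
    rcases hZ' i j with h | h <;> rw [h] <;> norm_num
  have habse : ∀ (x : ℝ), |2 * ((N:ℝ)⁻¹ * x)| = 2 * (N:ℝ)⁻¹ * |x| := by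
    intro x
    rw [abs_mul, abs_mul, abs_of_nonneg (by norm_num : (0:ℝ) ≤ 2),
      abs_of_nonneg (by positivity : (0:ℝ) ≤ (N:ℝ)⁻¹), mul_assoc]
  have hwhat01 : ∀ (W : Fin M → Fin N → ℤ) (i : Fin M),
      0 ≤ OneStepWMV.what W i ∧ OneStepWMV.what W i ≤ 1 := by
    intro W i
    unfold OneStepWMV.what
    constructor
    · apply mul_nonneg (by positivity)
      apply Finset.sum_nonneg
      intro k _
      split <;> norm_num
    · have hle : (∑ j, if W i j = OneStepWMV.mvSign W j then (1:ℝ) else 0) ≤ N := by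
        calc (∑ j, if W i j = OneStepWMV.mvSign W j then (1:ℝ) else 0)
            ≤ ∑ j : Fin N, (1:ℝ) := by
              apply Finset.sum_le_sum
              intro k _
              split <;> norm_num
          _ = N := by simp
      calc (N : ℝ)⁻¹ * (∑ j, if W i j = OneStepWMV.mvSign W j then (1:ℝ) else 0)
          ≤ (N : ℝ)⁻¹ * N := by
            apply mul_le_mul_of_nonneg_left hle (by positivity)
        _ = 1 := by field_simp
  have hcard : ((Finset.univ.erase istar).card : ℝ) = (M:ℝ) - 1 := by
    rw [Finset.card_erase_of_mem (Finset.mem_univ _)]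
    simp only [Finset.card_univ, Fintype.card_fin]
    have : 1 ≤ M := by omega
    push_cast [Nat.cast_sub this]
    ring
  have hsum_erase : ∑ i ∈ Finset.univ.erase istar, |d i| ≤ (M:ℝ) - 1 := by
    calc ∑ i ∈ Finset.univ.erase istar, |d i|
        ≤ ∑ i ∈ Finset.univ.erase istar, (1:ℝ) :=
          Finset.sum_le_sum (fun i _ => habs1 i)
      _ = (M:ℝ) - 1 := by rw [Finset.sum_const, nsmul_eq_mul, mul_one, hcard]
  have hM1 : (1:ℝ) ≤ (M:ℝ) - 1 := by
    have : (2:ℝ) ≤ (M:ℝ) := by exact_mod_cast hM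
    linarith
  have hdsum : ∑ i, |d i| ≤ (M:ℝ) - 1 := by
    rw [← Finset.sum_erase_add _ _ (Finset.mem_univ istar)]
    by_cases hy : OneStepWMV.mvSign Z jstar = OneStepWMV.mvSign Z' jstar
    · have hz : ∀ i, i ≠ istar → d i = 0 := by
        intro i hi
        have hzz : Z i jstar = Z' i jstar := hsame i jstar (by simp [Prod.ext_iff, hi])
        rw [hd]
        simp only []
        rw [hzz, hy]
        ring
      have : ∑ i ∈ Finset.univ.erase istar, |d i| = 0 := by
        apply Finset.sum_eq_zero
        intro i hi
        rw [hz i (Finset.ne_of_mem_erase hi), abs_zero]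
      rw [this, zero_add]
      exact le_trans (habs1 istar) hM1
    · have hds : d istar = 0 := by
        have hy1 : OneStepWMV.mvSign Z jstar = 1 ∨ OneStepWMV.mvSign Z jstar = -1 := by
          unfold OneStepWMV.mvSign; split <;> simp
        have hy2 : OneStepWMV.mvSign Z' jstar = 1 ∨ OneStepWMV.mvSign Z' jstar = -1 := by
          unfold OneStepWMV.mvSign; split <;> simp
        rw [hd]
        simp only []
        rcases hZ istar jstar with h1 | h1 <;> rcases hZ' istar jstar with h2 | h2 <;>
          rcases hy1 with h3 | h3 <;> rcases hy2 with h4 | h4 <;>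
          rw [h1, h2, h3, h4] <;>
          first
            | (exfalso; rw [h1, h2] at hdiff; exact hdiff rfl)
            | (exfalso; rw [h3, h4] at hy; exact hy rfl)
            | norm_num
      rw [hds, abs_zero, add_zero]
      exact hsum_erase
  intro j
  constructor
  · -- case jstar ≠ j
    intro hj
    have hkey : OneStepWMV.wmvScore Z j - OneStepWMV.wmvScore Z' j
        = ∑ i, 2 * ((N:ℝ)⁻¹ * d i) * (Z i j : ℝ) := by
      unfold OneStepWMV.wmvScore
      rw [← Finset.sum_sub_distrib]
      apply Finset.sum_congr rfl
      intro i _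
      rw [hcol j (Ne.symm hj) i, ← hwhat i]
      ring
    rw [hkey]
    calc |∑ i, 2 * ((N:ℝ)⁻¹ * d i) * (Z i j : ℝ)|
        ≤ ∑ i, |2 * ((N:ℝ)⁻¹ * d i) * (Z i j : ℝ)| := Finset.abs_sum_le_sum_abs _ _
      _ = ∑ i, 2 * (N:ℝ)⁻¹ * |d i| := by
          apply Finset.sum_congr rfl
          intro i _
          rw [abs_mul, hZreal, mul_one, habse]
      _ = 2 * (N:ℝ)⁻¹ * ∑ i, |d i| := by rw [Finset.mul_sum]
      _ ≤ 2 * (N:ℝ)⁻¹ * ((M:ℝ) - 1) := by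
          apply mul_le_mul_of_nonneg_left hdsum (by positivity)
      _ = 2 * ((M : ℝ) - 1) / (N : ℝ) := by field_simp
  · -- case jstar = j
    intro hj
    subst hj
    have hkey : OneStepWMV.wmvScore Z jstar - OneStepWMV.wmvScore Z' jstar
        = ∑ i, ((2 * OneStepWMV.what Z i - 1) * (Z i jstar : ℝ)
              - (2 * OneStepWMV.what Z' i - 1) * (Z' i jstar : ℝ)) := by
      unfold OneStepWMV.wmvScore
      rw [← Finset.sum_sub_distrib]
    rw [hkey]
    have hterm : ∀ i, i ≠ istar →
        |(2 * OneStepWMV.what Z i - 1) * (Z i jstar : ℝ)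
          - (2 * OneStepWMV.what Z' i - 1) * (Z' i jstar : ℝ)| = 2 * (N:ℝ)⁻¹ * |d i| := by
      intro i hi
      have hzz : Z i jstar = Z' i jstar := hsame i jstar (by simp [Prod.ext_iff, hi])
      rw [← hzz]
      have : (2 * OneStepWMV.what Z i - 1) * (Z i jstar : ℝ)
          - (2 * OneStepWMV.what Z' i - 1) * (Z i jstar : ℝ)
          = 2 * ((N:ℝ)⁻¹ * d i) * (Z i jstar : ℝ) := by
        rw [← hwhat i]; ring
      rw [this, abs_mul, hZreal, mul_one, habse]
    have hstar : |(2 * OneStepWMV.what Z istar - 1) * (Z istar jstar : ℝ)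
          - (2 * OneStepWMV.what Z' istar - 1) * (Z' istar jstar : ℝ)| ≤ 2 := by
      have h1 := hwhat01 Z istar
      have h2 := hwhat01 Z' istar
      have b1 : |2 * OneStepWMV.what Z istar - 1| ≤ 1 := by
        rw [abs_le]; constructor <;> linarith [h1.1, h1.2]
      have b2 : |2 * OneStepWMV.what Z' istar - 1| ≤ 1 := by
        rw [abs_le]; constructor <;> linarith [h2.1, h2.2]
      calc |(2 * OneStepWMV.what Z istar - 1) * (Z istar jstar : ℝ)
              - (2 * OneStepWMV.what Z' istar - 1) * (Z' istar jstar : ℝ)|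
          ≤ |(2 * OneStepWMV.what Z istar - 1) * (Z istar jstar : ℝ)|
            + |(2 * OneStepWMV.what Z' istar - 1) * (Z' istar jstar : ℝ)| := abs_sub _ _
        _ = |2 * OneStepWMV.what Z istar - 1| + |2 * OneStepWMV.what Z' istar - 1| := by
            rw [abs_mul, abs_mul, hZreal, hZ'real, mul_one, mul_one]
        _ ≤ 2 := by linarith
    calc |∑ i, ((2 * OneStepWMV.what Z i - 1) * (Z i jstar : ℝ)
              - (2 * OneStepWMV.what Z' i - 1) * (Z' i jstar : ℝ))|
        ≤ ∑ i, |(2 * OneStepWMV.what Z i - 1) * (Z i jstar : ℝ)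
              - (2 * OneStepWMV.what Z' i - 1) * (Z' i jstar : ℝ)| :=
          Finset.abs_sum_le_sum_abs _ _
      _ = (∑ i ∈ Finset.univ.erase istar, |(2 * OneStepWMV.what Z i - 1) * (Z i jstar : ℝ)
              - (2 * OneStepWMV.what Z' i - 1) * (Z' i jstar : ℝ)|)
          + |(2 * OneStepWMV.what Z istar - 1) * (Z istar jstar : ℝ)
              - (2 * OneStepWMV.what Z' istar - 1) * (Z' istar jstar : ℝ)| :=
          (Finset.sum_erase_add _ _ (Finset.mem_univ istar)).symm
      _ ≤ (∑ i ∈ Finset.univ.erase istar, 2 * (N:ℝ)⁻¹ * |d i|) + 2 := by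
          apply add_le_add _ hstar
          apply le_of_eq
          apply Finset.sum_congr rfl
          intro i hi
          exact hterm i (Finset.ne_of_mem_erase hi)
      _ ≤ 2 * (N:ℝ)⁻¹ * ((M:ℝ) - 1) + 2 := by
          rw [← Finset.mul_sum]
          have := mul_le_mul_of_nonneg_left hsum_erase
            (by positivity : (0:ℝ) ≤ 2 * (N:ℝ)⁻¹)
          linarith
      _ = 2 * ((M : ℝ) - 1) / (N : ℝ) + 2 := by field_simp
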